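/- Let m₁: A⊗A → A be the multiplication, Δ₁ = Δ: A → A⊗A, ι₁(t)=1⊗t, and ε₁: A⊗A → A the map (ε⊗Id) with ε(1)=−c, ε(X)=1. Define ℘ = m₁ − m₁∘Δ₁∘ε₁ : A⊗A → A and ℵ = ι₁ − c·(ι₁∘m₁∘Δ₁) : A → A⊗A. Then ℘∘Δ₁ = 0 and ℘∘ℵ = Id_A. -/

import Mathlib

/-!
Both identities are formal consequences of four facts about `A`: `ε₁ ∘ Δ = id`, `m ∘ ι₁ = id`,
`ε₁ ∘ ι₁ = -c`, and `(m ∘ Δ)² = 0` (as `mΔ(1) = 2X` and `mΔ(X) = 0`). The first gives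
`℘ ∘ Δ = mΔ - mΔ = 0`. The next two give `℘ ∘ ι₁ = id + c·mΔ`, hence
`℘ ∘ ℵ = id + c·mΔ - c·(id + c·mΔ)·mΔ = id - c²·(mΔ)² = id`.
-/

open TensorProduct

noncomputable section

abbrev R : Type := Polynomial ℤ
abbrev A : Type := R × R

/-- The `R`-linear map out of `A = R·1 ⊕ R·X` sending `1 ↦ p` and `X ↦ q`. -/
def lmap {P : Type*} [AddCommGroup P] [Module R P] (p q : P) : A →ₗ[R] P :=
  (LinearMap.toSpanSingleton R P p).coprod (LinearMap.toSpanSingleton R P q)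

/-- The basis element `1` of `A`. -/
def one' : A := (1, 0)

/-- The basis element `X` of `A`. -/
def Xa : A := (0, 1)

/-- Multiplication `m : A ⊗ A → A`, with `1·1 = 1`, `1·X = X·1 = X`, `X² = 0`. -/
def mul : A ⊗[R] A →ₗ[R] A :=
  TensorProduct.lift (lmap LinearMap.id (lmap Xa 0))

/-- Comultiplication `Δ(1) = 1⊗X + X⊗1 + c X⊗X`, `Δ(X) = X⊗X`. -/
def Δ : A →ₗ[R] A ⊗[R] A :=
  lmap (one' ⊗ₜ[R] Xa + Xa ⊗ₜ[R] one' + (Polynomial.X : R) • (Xa ⊗ₜ[R] Xa)) (Xa ⊗ₜ[R] Xa)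

/-- Counit `ε(1) = -c`, `ε(X) = 1`. -/
def ε : A →ₗ[R] R := lmap (-Polynomial.X) 1

/-- `ι₁ : A → A⊗A`, `t ↦ 1⊗t`. -/
def ι₁ : A →ₗ[R] A ⊗[R] A := TensorProduct.mk R A A one'

/-- `ε₁ = (ε ⊗ Id) : A⊗A → A`. -/
def ε₁ : A ⊗[R] A →ₗ[R] A :=
  (TensorProduct.lid R A).toLinearMap ∘ₗ TensorProduct.map ε LinearMap.id

/-- `℘ = m₁ − m₁∘Δ₁∘ε₁`. -/
def wp : A ⊗[R] A →ₗ[R] A := mul - mul ∘ₗ Δ ∘ₗ ε₁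

/-- `ℵ = ι₁ − c·(ι₁∘m₁∘Δ₁)`. -/
def aleph : A →ₗ[R] A ⊗[R] A := ι₁ - (Polynomial.X : R) • (ι₁ ∘ₗ mul ∘ₗ Δ)

section Abstract

variable {S M N : Type*} [CommRing S] [AddCommGroup M] [Module S M] [AddCommGroup N] [Module S N]
  {m e : N →ₗ[S] M} {d ι : M →ₗ[S] N}

theorem sub_comp_comp_comp_self_eq_zero (hed : e ∘ₗ d = LinearMap.id) :
    (m - m ∘ₗ d ∘ₗ e) ∘ₗ d = 0 := by
  simp only [LinearMap.sub_comp, LinearMap.comp_assoc, hed, LinearMap.comp_id, sub_self]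

theorem sub_comp_comp_comp_sub_smul_eq_id (c : S) (hmι : m ∘ₗ ι = LinearMap.id)
    (heι : e ∘ₗ ι = -c • LinearMap.id) (hsq : (m ∘ₗ d) ∘ₗ (m ∘ₗ d) = 0) :
    (m - m ∘ₗ d ∘ₗ e) ∘ₗ (ι - c • (ι ∘ₗ m ∘ₗ d)) = LinearMap.id := by
  have hι : (m - m ∘ₗ d ∘ₗ e) ∘ₗ ι = LinearMap.id + c • (m ∘ₗ d) := by
    rw [LinearMap.sub_comp, LinearMap.comp_assoc, LinearMap.comp_assoc, heι, hmι,
      LinearMap.comp_smul, LinearMap.comp_smul, LinearMap.comp_id, neg_smul, sub_neg_eq_add]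
  calc (m - m ∘ₗ d ∘ₗ e) ∘ₗ (ι - c • (ι ∘ₗ m ∘ₗ d))
      = (m - m ∘ₗ d ∘ₗ e) ∘ₗ ι - c • (((m - m ∘ₗ d ∘ₗ e) ∘ₗ ι) ∘ₗ (m ∘ₗ d)) := by
        rw [LinearMap.comp_sub, LinearMap.comp_smul]
        rfl
    _ = LinearMap.id - (c * c) • ((m ∘ₗ d) ∘ₗ (m ∘ₗ d)) := by
        rw [hι, LinearMap.add_comp, LinearMap.smul_comp, LinearMap.id_comp, smul_add, smul_smul]
        abel
    _ = LinearMap.id := by rw [hsq, smul_zero, sub_zero]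

end Abstract

theorem linearMap_ext_A {P : Type*} [AddCommGroup P] [Module R P] {f g : A →ₗ[R] P}
    (h1 : f one' = g one') (hX : f Xa = g Xa) : f = g := by
  ext
  · simpa [one'] using h1
  · simpa [Xa] using hX

@[simp] theorem lmap_one' {P : Type*} [AddCommGroup P] [Module R P] (p q : P) :
    lmap p q one' = p := by
  simp [lmap, one']

@[simp] theorem lmap_Xa {P : Type*} [AddCommGroup P] [Module R P] (p q : P) :
    lmap p q Xa = q := by
  simp [lmap, Xa]

@[simp] theorem mul_one'_tmul (x : A) : mul (one' ⊗ₜ x) = x := by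
  simp [mul]

@[simp] theorem mul_Xa_tmul_one' : mul (Xa ⊗ₜ one') = Xa := by
  simp [mul]

@[simp] theorem mul_Xa_tmul_Xa : mul (Xa ⊗ₜ Xa) = 0 := by
  simp [mul]

@[simp] theorem ε₁_tmul (a b : A) : ε₁ (a ⊗ₜ b) = ε a • b := by
  simp [ε₁]

theorem mul_comp_ι₁ : mul ∘ₗ ι₁ = LinearMap.id :=
  LinearMap.ext fun x => by simp [ι₁]

theorem ε₁_comp_ι₁ : ε₁ ∘ₗ ι₁ = -(Polynomial.X : R) • LinearMap.id :=
  LinearMap.ext fun x => by simp [ι₁, ε]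

theorem ε₁_comp_Δ : ε₁ ∘ₗ Δ = LinearMap.id := by
  apply linearMap_ext_A <;> simp [Δ, ε]

theorem mul_Δ_one' : mul (Δ one') = (2 : R) • Xa := by
  simp [Δ, two_smul]

theorem mul_Δ_Xa : mul (Δ Xa) = 0 := by
  simp [Δ]

theorem mul_comp_Δ_comp_mul_comp_Δ : (mul ∘ₗ Δ) ∘ₗ (mul ∘ₗ Δ) = 0 := by
  apply linearMap_ext_A
  · simp [mul_Δ_one', mul_Δ_Xa]
  · simp [mul_Δ_Xa]

/-- `℘∘Δ₁ = 0` and `℘∘ℵ = Id`. -/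
theorem stmt8 : wp ∘ₗ Δ = 0 ∧ wp ∘ₗ aleph = LinearMap.id :=
  ⟨sub_comp_comp_comp_self_eq_zero ε₁_comp_Δ,
    sub_comp_comp_comp_sub_smul_eq_id _ mul_comp_ι₁ ε₁_comp_ι₁ mul_comp_Δ_comp_mul_comp_Δ⟩
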